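/- arXiv:1309.2857 — 2 statements merged into one kernel-verified Lean document; each statement's English description precedes it below -/
import Mathlib

section
/- If the Markov kernel P satisfies PV ≤ δV + L·1_A for an atom A (i.e., P(a,·) = P(a',·) for all a, a' ∈ A), then r_ess(P) ≤ δ. Indeed, with ν := P(a_0, ·) for any a_0 ∈ A and L := sup_{x∈A}(PV)(x), one has L = ν(V), so τ = 0 in the bound (δ·ν(1_X) + τ)/(ν(1_X) + τ). -/
/-
On the weighted space `B_V ≅ ℓ^∞`, the operator splits as `T_P = R + N` where `R g = 1_A · T_P g`
and `N g = 1_{Aᶜ} · T_P g`. Because all rows of `P` over the atom coincide, `R g` is a multiple of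
the fixed function `1_A · V(a₀) / V`, so `R` has rank one and is compact. Off the atom the drift
inequality reads `PV ≤ δ V`, so `‖N‖ ≤ δ`. Then `T_P^n - N^n` is compact for every `n` and
`‖N^n‖ ≤ δ^n`, which bounds the essential spectral radius by `δ`.
-/

open Filter
open scoped ENNReal

/-- The essential spectral radius of a bounded operator `T`:
`r_ess(T) = lim_n (inf{‖T^n − K‖ : K compact})^{1/n}` (taken as a `limsup`). -/
noncomputable def essRadius {E : Type*} [NormedAddCommGroup E] [NormedSpace ℝ E]
    (T : E →L[ℝ] E) : ℝ :=
  Filter.limsup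
    (fun n : ℕ =>
      (sInf {r : ℝ | ∃ K : E →L[ℝ] E, IsCompactOperator K ∧ ‖T ^ n - K‖ = r}) ^ ((n : ℝ)⁻¹))
    Filter.atTop

section EssRadius

variable {𝕜 E : Type*} [NontriviallyNormedField 𝕜] [NormedAddCommGroup E] [NormedSpace 𝕜 E]

theorem IsCompactOperator.pow_sub_pow {T N : E →L[𝕜] E} (h : IsCompactOperator (T - N))
    (n : ℕ) : IsCompactOperator ⇑(T ^ n - N ^ n) := by
  induction n with
  | zero => simpa using isCompactOperator_zero
  | succ n ih =>
    have hsplit : T ^ (n + 1) - N ^ (n + 1) = T * (T ^ n - N ^ n) + (T - N) * N ^ n := by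
      rw [pow_succ', pow_succ', mul_sub, sub_mul]
      abel
    rw [hsplit]
    exact (ih.clm_comp T).add (h.comp_clm (N ^ n))

variable {F : Type*} [NormedAddCommGroup F] [NormedSpace ℝ F]

theorem essRadius_le_of_forall_exists_isCompactOperator {T : F →L[ℝ] F} {δ : ℝ} (hδ : 0 ≤ δ)
    (h : ∀ n ≠ 0, ∃ K : F →L[ℝ] F, IsCompactOperator K ∧ ‖T ^ n - K‖ ≤ δ ^ n) :
    essRadius T ≤ δ := by
  have hnonneg (n : ℕ) :
      0 ∈ lowerBounds {r : ℝ | ∃ K : F →L[ℝ] F, IsCompactOperator K ∧ ‖T ^ n - K‖ = r} := by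
    rintro r ⟨K, -, rfl⟩
    exact norm_nonneg _
  have hinf_nonneg (n : ℕ) := Real.sInf_nonneg (hnonneg n)
  apply limsup_le_of_le
  · exact isCoboundedUnder_le_of_eventually_le atTop
      (Eventually.of_forall fun n => Real.rpow_nonneg (hinf_nonneg n) _)
  · filter_upwards [eventually_ne_atTop 0] with n hn
    obtain ⟨K, hK, hTK⟩ := h n hn
    have hinf : sInf {r : ℝ | ∃ K : F →L[ℝ] F, IsCompactOperator K ∧ ‖T ^ n - K‖ = r} ≤ δ ^ n :=
      (csInf_le ⟨0, hnonneg n⟩ ⟨K, hK, rfl⟩).trans hTK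
    calc _ ≤ (δ ^ n) ^ (n : ℝ)⁻¹ := Real.rpow_le_rpow (hinf_nonneg n) hinf (by positivity)
      _ = δ := Real.pow_rpow_inv_natCast hδ hn

theorem essRadius_le_of_isCompactOperator_sub {T N : F →L[ℝ] F} {δ : ℝ} (hδ : 0 ≤ δ)
    (hTN : IsCompactOperator (T - N)) (hN : ‖N‖ ≤ δ) : essRadius T ≤ δ := by
  refine essRadius_le_of_forall_exists_isCompactOperator hδ fun n hn => ⟨T ^ n - N ^ n,
    hTN.pow_sub_pow n, ?_⟩
  rw [sub_sub_cancel]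
  exact (norm_pow_le' N (Nat.pos_of_ne_zero hn)).trans (pow_le_pow_left₀ (norm_nonneg N) hN n)

end EssRadius

section PositiveOperator

variable {X : Type*} {P : Module.End ℝ (X → ℝ)}

theorem abs_apply_le_of_abs_le (hpos : ∀ f : X → ℝ, (∀ x, 0 ≤ f x) → ∀ x, 0 ≤ P f x)
    {f g : X → ℝ} (hfg : ∀ y, |f y| ≤ g y) (x : X) : |P f x| ≤ P g x := by
  have hsub := hpos (g - f) (fun y => by
    simp only [Pi.sub_apply]; linarith [le_abs_self (f y), hfg y]) x
  have hadd := hpos (g + f) (fun y => by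
    simp only [Pi.add_apply]; linarith [neg_abs_le (f y), hfg y]) x
  rw [map_sub, Pi.sub_apply] at hsub
  rw [map_add, Pi.add_apply] at hadd
  exact abs_le.2 ⟨by linarith, by linarith⟩

theorem abs_weighted_apply_le {V : X → ℝ} (hV : ∀ x, 0 < V x)
    (hpos : ∀ f : X → ℝ, (∀ x, 0 ≤ f x) → ∀ x, 0 ≤ P f x)
    {TP : lp (fun _ : X => ℝ) ∞ →L[ℝ] lp (fun _ : X => ℝ) ∞}
    (hTP : ∀ g : lp (fun _ : X => ℝ) ∞, ∀ x, TP g x = P (fun y => g y * V y) x / V x)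
    {c : ℝ} {x : X} (hx : P V x ≤ c * V x) (g : lp (fun _ : X => ℝ) ∞) :
    |TP g x| ≤ c * ‖g‖ := by
  have hgV : ∀ y, |g y * V y| ≤ (‖g‖ • V) y := fun y => by
    rw [abs_mul, abs_of_pos (hV y), Pi.smul_apply, smul_eq_mul]
    exact mul_le_mul_of_nonneg_right (lp.norm_apply_le_norm ENNReal.top_ne_zero g y) (hV y).le
  have hrow := abs_apply_le_of_abs_le hpos hgV x
  rw [map_smul, Pi.smul_apply, smul_eq_mul] at hrow
  rw [hTP, abs_div, abs_of_pos (hV x), div_le_iff₀ (hV x)]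
  calc _ ≤ ‖g‖ * P V x := hrow
    _ ≤ ‖g‖ * (c * V x) := mul_le_mul_of_nonneg_left hx (norm_nonneg g)
    _ = c * ‖g‖ * V x := by ring

end PositiveOperator

theorem memℓp_infty_indicator_inv {X : Type*} {V : X → ℝ} (hV : ∀ x, 1 ≤ V x) (A : Set X) :
    Memℓp (A.indicator fun x => (V x)⁻¹) ∞ := by
  refine memℓp_infty ⟨1, ?_⟩
  rintro r ⟨x, rfl⟩
  by_cases hx : x ∈ A
  · dsimp only
    rw [Set.indicator_of_mem hx, Real.norm_eq_abs, abs_inv, abs_of_pos (one_pos.trans_le (hV x))]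
    exact inv_le_one_of_one_le₀ (hV x)
  · simp [Set.indicator_of_notMem hx]

theorem weighted_apply_eq_of_mem_atom {X : Type*} {V : X → ℝ} (hV : ∀ x, 0 < V x)
    {P : Module.End ℝ (X → ℝ)} {A : Set X}
    (hatom : ∀ a ∈ A, ∀ a' ∈ A, ∀ f : X → ℝ, P f a = P f a')
    {TP : lp (fun _ : X => ℝ) ∞ →L[ℝ] lp (fun _ : X => ℝ) ∞}
    (hTP : ∀ g : lp (fun _ : X => ℝ) ∞, ∀ x, TP g x = P (fun y => g y * V y) x / V x)
    {a₀ x : X} (ha₀ : a₀ ∈ A) (hx : x ∈ A) (g : lp (fun _ : X => ℝ) ∞) :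
    TP g x = V a₀ * TP g a₀ * (V x)⁻¹ := by
  rw [hTP, hTP, hatom x hx a₀ ha₀, mul_div_cancel₀ _ (hV a₀).ne', div_eq_mul_inv]

theorem atom_ess_radius_le_delta_general
    (X : Type*)
    (V : X → ℝ) (hV : ∀ x, 1 ≤ V x)
    (P : Module.End ℝ (X → ℝ))
    (hpos : ∀ f : X → ℝ, (∀ x, 0 ≤ f x) → ∀ x, 0 ≤ P f x)
    (A : Set X) (hA : A.Nonempty)
    (hatom : ∀ a ∈ A, ∀ a' ∈ A, ∀ f : X → ℝ, P f a = P f a')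
    (δ L : ℝ) (hδ0 : 0 < δ)
    (hdrift : ∀ x, P V x ≤ δ * V x + L * A.indicator (fun _ => (1 : ℝ)) x)
    (TP : lp (fun _ : X => ℝ) ∞ →L[ℝ] lp (fun _ : X => ℝ) ∞)
    (hTP : ∀ g : lp (fun _ : X => ℝ) ∞, ∀ x,
      TP g x = P (fun y => g y * V y) x / V x) :
    essRadius TP ≤ δ ∧ ∀ a₀ ∈ A, ∀ a₁ ∈ A, P V a₀ = P V a₁ := by
  refine ⟨?_, fun a₀ h₀ a₁ h₁ => hatom a₀ h₀ a₁ h₁ V⟩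
  obtain ⟨a₀, ha₀⟩ := hA
  have hVpos (x : X) : 0 < V x := one_pos.trans_le (hV x)
  let χ : lp (fun _ : X => ℝ) ∞ := ⟨_, memℓp_infty_indicator_inv hV A⟩
  -- `R g = 1_A · T_P g`, of rank one by `weighted_apply_eq_of_mem_atom`
  let R := (ContinuousLinearMap.toSpanSingleton ℝ χ).comp (V a₀ • (lp.evalCLM ℝ _ ∞ a₀).comp TP)
  have hR : IsCompactOperator R :=
    (isCompactOperator_of_locallyCompactSpace_rng (.toSpanSingleton ℝ χ)).comp_clm _
  refine essRadius_le_of_isCompactOperator_sub hδ0.le (N := TP - R) (by rwa [sub_sub_cancel]) ?_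
  refine ContinuousLinearMap.opNorm_le_bound _ hδ0.le fun g =>
    lp.norm_le_of_forall_le (by positivity) fun x => ?_
  have hN : (TP - R) g x = TP g x - V a₀ * TP g a₀ * A.indicator (fun x => (V x)⁻¹) x := rfl
  by_cases hx : x ∈ A
  · rw [hN, Set.indicator_of_mem hx, ← weighted_apply_eq_of_mem_atom hVpos hatom hTP ha₀ hx,
      sub_self, norm_zero]
    positivity
  · rw [hN, Set.indicator_of_notMem hx, mul_zero, sub_zero, Real.norm_eq_abs]
    exact abs_weighted_apply_le hVpos hpos hTP
      (by simpa [Set.indicator_of_notMem hx] using hdrift x) g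

theorem atom_ess_radius_le_delta
    (X : Type*) [MeasurableSpace X]
    (V : X → ℝ) (hV : ∀ x, 1 ≤ V x)
    (P : Module.End ℝ (X → ℝ))
    (hpos : ∀ f : X → ℝ, (∀ x, 0 ≤ f x) → ∀ x, 0 ≤ P f x)
    (hmarkov : P (fun _ => (1 : ℝ)) = fun _ => (1 : ℝ))
    (A : Set X) (hA : A.Nonempty)
    (hatom : ∀ a ∈ A, ∀ a' ∈ A, ∀ f : X → ℝ, P f a = P f a')
    (δ L : ℝ) (hδ0 : 0 < δ) (hδ1 : δ < 1) (hL : 0 < L)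
    (hdrift : ∀ x, P V x ≤ δ * V x + L * A.indicator (fun _ => (1 : ℝ)) x)
    (TP : lp (fun _ : X => ℝ) ∞ →L[ℝ] lp (fun _ : X => ℝ) ∞)
    (hTP : ∀ g : lp (fun _ : X => ℝ) ∞, ∀ x,
      TP g x = P (fun y => g y * V y) x / V x) :
    essRadius TP ≤ δ ∧ ∀ a₀ ∈ A, ∀ a₁ ∈ A, P V a₀ = P V a₁ :=
  atom_ess_radius_le_delta_general X V hV P hpos A hA hatom δ L hδ0 hdrift TP hTP
end

section
/- Let P be a Markov kernel on ℕ with unbounded increasing weight V (V(0)=1, lim_k V(k) = ∞). Then the inclusion operator B_0 → B_1 is compact, and hence if PV ≤ δV + L·1_ℕ with δ ∈ (0,1), then P : B_0 → B_1 is compact and P is quasi-compact on B_1 with r_ess(P) ≤ δ. -/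
/-!
`B₀` and `B₁` are both modelled by `ℓ^∞(ℕ, ℝ)`, the latter through the isometry `f ↦ f / V`;
then `J` is the inclusion `B₀ → B₁`, `S` is `P : B₀ → B₁` and `TP` is `P` acting on `B₁`.

Truncation to the first `N` coordinates has finite rank, so it is compact. If an operator `A`
satisfies `|A g i| ≤ ‖g‖ w i` with `w` antitone, then `A` is within `w N` of its truncation.
For `J` and `S` one can take `w = 1 / V → 0`, so they are norm limits of compact operators.
Iterating the drift inequality gives `|Pⁿ g| V ≤ ‖g‖ (δⁿ V + L ∑_{k<n} δᵏ)`, i.e. the bound for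
`TPⁿ` holds with `w = δⁿ + Cₙ / V → δⁿ`; hence `TPⁿ` lies within `δⁿ` of the compact operators
and `r_ess(TP) ≤ δ`.
-/

open Filter
open scoped ENNReal

open Topology Finset
open scoped lp

section EssentialNorm

variable {E : Type*} [NormedAddCommGroup E] [NormedSpace ℝ E]

/-- `essRadius T` unfolds to `limsup (fun n => essNorm (T ^ n) ^ (n⁻¹ : ℝ)) atTop`. -/
noncomputable def essNorm (T : E →L[ℝ] E) : ℝ :=
  sInf {r : ℝ | ∃ K : E →L[ℝ] E, IsCompactOperator K ∧ ‖T - K‖ = r}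

lemma essNorm_le_norm_sub (T : E →L[ℝ] E) {K : E →L[ℝ] E} (hK : IsCompactOperator K) :
    essNorm T ≤ ‖T - K‖ :=
  csInf_le ⟨0, fun _ ⟨_, _, hr⟩ => hr ▸ norm_nonneg _⟩ ⟨K, hK, rfl⟩

lemma essNorm_nonneg (T : E →L[ℝ] E) : 0 ≤ essNorm T :=
  le_csInf ⟨_, 0, isCompactOperator_zero, rfl⟩ fun _ ⟨_, _, hr⟩ => hr ▸ norm_nonneg _

lemma essRadius_le_of_essNorm_pow_le {T : E →L[ℝ] E} {δ : ℝ} (hδ : 0 ≤ δ)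
    (h : ∀ n, essNorm (T ^ n) ≤ δ ^ n) : essRadius T ≤ δ := by
  refine limsup_le_of_le
    (isCoboundedUnder_le_of_le atTop fun n => Real.rpow_nonneg (essNorm_nonneg (T ^ n)) _) ?_
  filter_upwards [eventually_ne_atTop 0] with n hn
  calc essNorm (T ^ n) ^ (n⁻¹ : ℝ) ≤ (δ ^ n) ^ (n⁻¹ : ℝ) :=
        Real.rpow_le_rpow (essNorm_nonneg _) (h n) (by positivity)
    _ = δ := Real.pow_rpow_inv_natCast hδ hn

end EssentialNorm

namespace lp

variable {α : Type*}

lemma abs_apply_le_norm (f : ℓ^∞(α, ℝ)) (i : α) : |f i| ≤ ‖f‖ :=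
  norm_apply_le_norm ENNReal.top_ne_zero f i

variable [DecidableEq α]

noncomputable def truncate (s : Finset α) : ℓ^∞(α, ℝ) →L[ℝ] ℓ^∞(α, ℝ) :=
  ∑ i ∈ s, (singleContinuousLinearMap ℝ (fun _ : α => ℝ) ∞ i).comp (evalCLM ℝ _ ∞ i)

lemma truncate_apply (s : Finset α) (f : ℓ^∞(α, ℝ)) (j : α) :
    truncate s f j = if j ∈ s then f j else 0 := by
  simp only [truncate, _root_.sum_apply, coeFn_sum, Finset.sum_apply,
    ContinuousLinearMap.comp_apply, singleContinuousLinearMap_apply, lp.coeFn_single]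
  exact Finset.sum_pi_single j f s

lemma isCompactOperator_truncate (s : Finset α) : IsCompactOperator (truncate s) :=
  Submodule.sum_mem (compactOperator (RingHom.id ℝ) _ _) fun i _ =>
    (isCompactOperator_of_locallyCompactSpace_dom (evalCLM ℝ (fun _ : α => ℝ) ∞ i)).clm_comp
      (singleContinuousLinearMap ℝ (fun _ : α => ℝ) ∞ i)

variable {w : ℕ → ℝ} {A : ℓ^∞(ℕ, ℝ) →L[ℝ] ℓ^∞(ℕ, ℝ)}

lemma norm_sub_truncate_range_comp_le (hw : Antitone w) (N : ℕ) (hwN : 0 ≤ w N)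
    (hA : ∀ g i, |A g i| ≤ ‖g‖ * w i) : ‖A - (truncate (range N)).comp A‖ ≤ w N := by
  refine ContinuousLinearMap.opNorm_le_bound _ hwN fun g =>
    norm_le_of_forall_le (by positivity) fun i => ?_
  rw [_root_.sub_apply, ContinuousLinearMap.comp_apply, coeFn_sub, Pi.sub_apply,
    truncate_apply, mul_comm, Real.norm_eq_abs]
  split_ifs with hi
  · simpa using mul_nonneg (norm_nonneg g) hwN
  · rw [sub_zero]
    exact (hA g i).trans (by gcongr; exact hw (by simpa using hi))

lemma essNorm_le_of_abs_apply_le {c : ℝ} (hc : 0 ≤ c) (hw : Antitone w)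
    (hwc : Tendsto w atTop (𝓝 c))
    (hA : ∀ g i, |A g i| ≤ ‖g‖ * w i) : essNorm A ≤ c :=
  ge_of_tendsto hwc <| Eventually.of_forall fun N =>
    (essNorm_le_norm_sub A ((isCompactOperator_truncate _).comp_clm A)).trans
      (norm_sub_truncate_range_comp_le hw N (hc.trans (hw.le_of_tendsto hwc N)) hA)

lemma isCompactOperator_of_abs_apply_le (hw : Antitone w) (hw0 : Tendsto w atTop (𝓝 0))
    (hA : ∀ g i, |A g i| ≤ ‖g‖ * w i) : IsCompactOperator A := by
  have hwpos : ∀ N, 0 ≤ w N := hw.le_of_tendsto hw0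
  refine isCompactOperator_of_tendsto (l := atTop) (F := fun N => (truncate (range N)).comp A) ?_
    (Eventually.of_forall fun N => (isCompactOperator_truncate _).comp_clm A)
  rw [tendsto_iff_norm_sub_tendsto_zero]
  refine squeeze_zero (fun N => norm_nonneg _) (fun N => ?_) hw0
  rw [norm_sub_rev]
  exact norm_sub_truncate_range_comp_le hw N (hwpos N) hA

end lp

lemma abs_tsum_mul_le_tsum_mul {ι : Type*} {p u v : ι → ℝ} (hp : ∀ j, 0 ≤ p j)
    (hv : Summable fun j => p j * v j) (huv : ∀ j, |u j| ≤ v j) :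
    |∑' j, p j * u j| ≤ ∑' j, p j * v j :=
  tsum_of_norm_bounded (f := fun j => p j * u j) hv.hasSum fun j => by
    rw [Real.norm_eq_abs, abs_mul, abs_of_nonneg (hp j)]
    exact mul_le_mul_of_nonneg_left (huv j) (hp j)

section Markov

variable {P : ℕ → ℕ → ℝ} {V : ℕ → ℝ} {δ L : ℝ} {TP : ℓ^∞(ℕ, ℝ) →L[ℝ] ℓ^∞(ℕ, ℝ)}

lemma abs_tsum_mul_le_norm (hPnonneg : ∀ i j, 0 ≤ P i j) (hProw : ∀ i, Summable (P i))
    (hPstoch : ∀ i, ∑' j, P i j = 1) (g : ℓ^∞(ℕ, ℝ)) (i : ℕ) :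
    |∑' j, P i j * g j| ≤ ‖g‖ :=
  calc |∑' j, P i j * g j| ≤ ∑' j, P i j * ‖g‖ :=
        abs_tsum_mul_le_tsum_mul (hPnonneg i) ((hProw i).mul_right _) (lp.abs_apply_le_norm g)
    _ = ‖g‖ := by rw [tsum_mul_right, hPstoch, one_mul]

lemma abs_apply_mul_le_of_drift (hPnonneg : ∀ i j, 0 ≤ P i j) (hProw : ∀ i, Summable (P i))
    (hPstoch : ∀ i, ∑' j, P i j = 1) (hVpos : ∀ i, 0 < V i)
    (hsum : ∀ i, Summable (fun j => P i j * V j)) (hdrift : ∀ i, ∑' j, P i j * V j ≤ δ * V i + L)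
    (hTP : ∀ g : ℓ^∞(ℕ, ℝ), ∀ i, TP g i = (∑' j, P i j * (g j * V j)) / V i)
    {h : ℓ^∞(ℕ, ℝ)} {a b : ℝ} (ha : 0 ≤ a) (hh : ∀ j, |h j| * V j ≤ a * V j + b) (i : ℕ) :
    |TP h i| * V i ≤ a * (δ * V i + L) + b := by
  have hsum' : Summable fun j => P i j * (a * V j + b) := by
    simpa only [mul_add, mul_left_comm _ a] using ((hsum i).mul_left a).add ((hProw i).mul_right b)
  calc |TP h i| * V i = |∑' j, P i j * (h j * V j)| := by
        rw [hTP, abs_div, abs_of_pos (hVpos i), div_mul_cancel₀ _ (hVpos i).ne']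
    _ ≤ ∑' j, P i j * (a * V j + b) := abs_tsum_mul_le_tsum_mul (hPnonneg i) hsum' fun j => by
        rw [abs_mul, abs_of_pos (hVpos j)]; exact hh j
    _ = a * ∑' j, P i j * V j + b := by
        simp only [mul_add, mul_left_comm _ a]
        rw [((hsum i).mul_left a).tsum_add ((hProw i).mul_right b), tsum_mul_left, tsum_mul_right,
          hPstoch, one_mul]
    _ ≤ a * (δ * V i + L) + b := by gcongr; exact hdrift i

lemma abs_pow_apply_mul_le (hPnonneg : ∀ i j, 0 ≤ P i j) (hProw : ∀ i, Summable (P i))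
    (hPstoch : ∀ i, ∑' j, P i j = 1) (hVpos : ∀ i, 0 < V i)
    (hsum : ∀ i, Summable (fun j => P i j * V j)) (hdrift : ∀ i, ∑' j, P i j * V j ≤ δ * V i + L)
    (hTP : ∀ g : ℓ^∞(ℕ, ℝ), ∀ i, TP g i = (∑' j, P i j * (g j * V j)) / V i) (hδ : 0 ≤ δ)
    (n : ℕ) (g : ℓ^∞(ℕ, ℝ)) (i : ℕ) :
    |(TP ^ n) g i| * V i ≤ ‖g‖ * (δ ^ n * V i + L * ∑ k ∈ range n, δ ^ k) := by
  induction n generalizing i with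
  | zero => simpa using mul_le_mul_of_nonneg_right (lp.abs_apply_le_norm g i) (hVpos i).le
  | succ n ih =>
    rw [pow_succ', mul_apply_eq_comp]
    calc _ ≤ ‖g‖ * δ ^ n * (δ * V i + L) + ‖g‖ * L * ∑ k ∈ range n, δ ^ k :=
          abs_apply_mul_le_of_drift hPnonneg hProw hPstoch hVpos hsum hdrift hTP (by positivity)
            (fun j => (ih j).trans_eq (by ring)) i
      _ = _ := by rw [sum_range_succ]; ring

lemma essNorm_pow_le_of_drift (hPnonneg : ∀ i j, 0 ≤ P i j) (hProw : ∀ i, Summable (P i))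
    (hPstoch : ∀ i, ∑' j, P i j = 1) (hVpos : ∀ i, 0 < V i) (hVmono : Monotone V)
    (hVtop : Tendsto V atTop atTop)
    (hsum : ∀ i, Summable (fun j => P i j * V j)) (hdrift : ∀ i, ∑' j, P i j * V j ≤ δ * V i + L)
    (hTP : ∀ g : ℓ^∞(ℕ, ℝ), ∀ i, TP g i = (∑' j, P i j * (g j * V j)) / V i) (hδ : 0 ≤ δ)
    (hL : 0 ≤ L) (n : ℕ) :
    essNorm (TP ^ n) ≤ δ ^ n := by
  set C := L * ∑ k ∈ range n, δ ^ k
  have hC : 0 ≤ C := mul_nonneg hL (sum_nonneg fun k _ => pow_nonneg hδ k)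
  have hw : Antitone fun i => δ ^ n + C / V i := fun i j hij => by
    dsimp only
    gcongr
    exacts [hVpos i, hVmono hij]
  refine lp.essNorm_le_of_abs_apply_le (pow_nonneg hδ n) hw ?_ fun g i => ?_
  · simpa using tendsto_const_nhds.add (hVtop.const_div_atTop C)
  · rw [← mul_le_mul_iff_of_pos_right (hVpos i), mul_assoc, add_mul,
      div_mul_cancel₀ _ (hVpos i).ne']
    exact abs_pow_apply_mul_le hPnonneg hProw hPstoch hVpos hsum hdrift hTP hδ n g i

end Markov

theorem discrete_inclusion_compact_ess_radius_general
    (P : ℕ → ℕ → ℝ)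
    (hPnonneg : ∀ i j, 0 ≤ P i j)
    (hProw : ∀ i, Summable (P i))
    (hPstoch : ∀ i, ∑' j, P i j = 1)
    (V : ℕ → ℝ) (hV1 : ∀ n, 1 ≤ V n) (hVmono : Monotone V)
    (hVtop : Tendsto V atTop atTop)
    (δ L : ℝ) (hδ0 : 0 < δ) (hL : 0 < L)
    (hsum : ∀ i, Summable (fun j => P i j * V j))
    (hdrift : ∀ i, ∑' j, P i j * V j ≤ δ * V i + L)
    (J : lp (fun _ : ℕ => ℝ) ∞ →L[ℝ] lp (fun _ : ℕ => ℝ) ∞)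
    (hJ : ∀ g : lp (fun _ : ℕ => ℝ) ∞, ∀ i, J g i = g i / V i)
    (S : lp (fun _ : ℕ => ℝ) ∞ →L[ℝ] lp (fun _ : ℕ => ℝ) ∞)
    (hS : ∀ g : lp (fun _ : ℕ => ℝ) ∞, ∀ i, S g i = (∑' j, P i j * g j) / V i)
    (TP : lp (fun _ : ℕ => ℝ) ∞ →L[ℝ] lp (fun _ : ℕ => ℝ) ∞)
    (hTP : ∀ g : lp (fun _ : ℕ => ℝ) ∞, ∀ i,
      TP g i = (∑' j, P i j * (g j * V j)) / V i) :
    IsCompactOperator J ∧ IsCompactOperator S ∧ essRadius TP ≤ δ := by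
  have hVpos : ∀ i, 0 < V i := fun i => one_pos.trans_le (hV1 i)
  have hVinv : Antitone V⁻¹ := fun i j hij => inv_anti₀ (hVpos i) (hVmono hij)
  have hdiv_le {x : ℝ} {g : ℓ^∞(ℕ, ℝ)} (hx : |x| ≤ ‖g‖) (i : ℕ) : |x / V i| ≤ ‖g‖ * V⁻¹ i := by
    rw [abs_div, abs_of_pos (hVpos i), div_eq_mul_inv]
    exact mul_le_mul_of_nonneg_right hx (inv_nonneg.2 (hVpos i).le)
  refine ⟨lp.isCompactOperator_of_abs_apply_le hVinv hVtop.inv_tendsto_atTop fun g i => ?_,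
    lp.isCompactOperator_of_abs_apply_le hVinv hVtop.inv_tendsto_atTop fun g i => ?_,
    essRadius_le_of_essNorm_pow_le hδ0.le fun n => essNorm_pow_le_of_drift hPnonneg hProw
      hPstoch hVpos hVmono hVtop hsum hdrift hTP hδ0.le hL.le n⟩
  · rw [hJ]
    exact hdiv_le (lp.abs_apply_le_norm g i) i
  · rw [hS]
    exact hdiv_le (abs_tsum_mul_le_norm hPnonneg hProw hPstoch g i) i

theorem discrete_inclusion_compact_ess_radius
    (P : ℕ → ℕ → ℝ)
    (hPnonneg : ∀ i j, 0 ≤ P i j)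
    (hProw : ∀ i, Summable (P i))
    (hPstoch : ∀ i, ∑' j, P i j = 1)
    (V : ℕ → ℝ) (hV1 : ∀ n, 1 ≤ V n) (hV0 : V 0 = 1) (hVmono : Monotone V)
    (hVtop : Tendsto V atTop atTop)
    (δ L : ℝ) (hδ0 : 0 < δ) (hδ1 : δ < 1) (hL : 0 < L)
    (hsum : ∀ i, Summable (fun j => P i j * V j))
    (hdrift : ∀ i, ∑' j, P i j * V j ≤ δ * V i + L)
    (J : lp (fun _ : ℕ => ℝ) ∞ →L[ℝ] lp (fun _ : ℕ => ℝ) ∞)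
    (hJ : ∀ g : lp (fun _ : ℕ => ℝ) ∞, ∀ i, J g i = g i / V i)
    (S : lp (fun _ : ℕ => ℝ) ∞ →L[ℝ] lp (fun _ : ℕ => ℝ) ∞)
    (hS : ∀ g : lp (fun _ : ℕ => ℝ) ∞, ∀ i, S g i = (∑' j, P i j * g j) / V i)
    (TP : lp (fun _ : ℕ => ℝ) ∞ →L[ℝ] lp (fun _ : ℕ => ℝ) ∞)
    (hTP : ∀ g : lp (fun _ : ℕ => ℝ) ∞, ∀ i,
      TP g i = (∑' j, P i j * (g j * V j)) / V i) :
    IsCompactOperator J ∧ IsCompactOperator S ∧ essRadius TP ≤ δ :=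
  discrete_inclusion_compact_ess_radius_general P hPnonneg hProw hPstoch V hV1 hVmono hVtop δ L hδ0
    hL hsum hdrift J hJ S hS TP hTP
end
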